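/- Symmetry of null tail counts: suppose the random vector W ∈ ℝ^p satisfies (W_1,…,W_p) =_d (ε_1·W_1,…,ε_p·W_p) for any sign vector ε ∈ {±1}^p independent of W with ε_j = +1 for all non-null j and ε_j i.i.d. uniform on {±1} for null j. Then for every t > 0, the random variable #{null j : W_j ≥ t} has the same distribution as #{null j : W_j ≤ −t}. -/

import Mathlib

/-! Flipping the signs of the null coordinates preserves the law of `ε` and commutes with
coordinatewise multiplication by `ε`, so it also preserves the law of `W`. The flip carries the
event `t ≤ W_j` onto `W_j ≤ -t` for null `j`, hence the two counts are equal in law. -/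

open MeasureTheory ProbabilityTheory

/-- The law of a uniform random sign: `(1/2)δ_{+1} + (1/2)δ_{-1}` on `ℝ`. -/
noncomputable def signUniform : MeasureTheory.Measure ℝ :=
  (2⁻¹ : ENNReal) • MeasureTheory.Measure.dirac (1 : ℝ)
    + (2⁻¹ : ENNReal) • MeasureTheory.Measure.dirac (-1 : ℝ)

instance : IsProbabilityMeasure signUniform := by
  constructor
  simp [signUniform, ENNReal.inv_two_add_inv_two]

lemma signUniform_map_neg : signUniform.map (fun r : ℝ => -r) = signUniform := by
  rw [signUniform, Measure.map_add _ _ measurable_neg, Measure.map_smul, Measure.map_smul,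
    Measure.map_dirac' measurable_neg, Measure.map_dirac' measurable_neg]
  simp [add_comm]

section SignFlip

variable {ι : Type*} (s : Finset ι)

lemma measurable_card_filter {P : ℝ → Prop} [DecidablePred P] (hP : MeasurableSet {r | P r}) :
    Measurable fun x : ι → ℝ => (s.filter fun j => P (x j)).card := by
  simp_rw [Finset.card_filter]
  exact Finset.measurable_sum _ fun j _ =>
    Measurable.ite (measurable_pi_apply j hP) measurable_const measurable_const

variable [DecidableEq ι]

def negOn (x : ι → ℝ) : ι → ℝ := fun j => if j ∈ s then -x j else x j

lemma card_filter_le_negOn (t : ℝ) (x : ι → ℝ) :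
    (s.filter fun j => t ≤ negOn s x j).card = (s.filter fun j => x j ≤ -t).card := by
  congr 1
  refine Finset.filter_congr fun j hj => ?_
  simp [negOn, hj, le_neg]

instance (j : ι) :
    IsProbabilityMeasure (if j ∈ s then signUniform else Measure.dirac (1 : ℝ)) := by
  split_ifs <;> infer_instance

variable [Fintype ι]

noncomputable def nullSignLaw : Measure (ι → ℝ) :=
  Measure.pi fun j => if j ∈ s then signUniform else Measure.dirac 1

instance : IsProbabilityMeasure (nullSignLaw s) := by
  unfold nullSignLaw
  infer_instance

lemma measurePreserving_negOn : MeasurePreserving (negOn s) (nullSignLaw s) (nullSignLaw s) := by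
  refine measurePreserving_pi _ _ (f := fun j r => if j ∈ s then -r else r) fun j => ?_
  by_cases hj : j ∈ s
  · simpa only [hj, if_true] using
      (⟨measurable_neg, signUniform_map_neg⟩ : MeasurePreserving (fun r : ℝ => -r) _ _)
  · simp only [hj, if_false]
    exact MeasurePreserving.id _

lemma map_negOn_eq_self {ν : Measure (ι → ℝ)} [SFinite ν]
    (hν : (ν.prod (nullSignLaw s)).map (fun x j => x.2 j * x.1 j) = ν) :
    ν.map (negOn s) = ν := by
  set m : (ι → ℝ) × (ι → ℝ) → ι → ℝ := fun x j => x.2 j * x.1 j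
  have hm : Measurable m := measurable_pi_iff.mpr fun j =>
    ((measurable_pi_apply j).comp measurable_snd).mul ((measurable_pi_apply j).comp measurable_fst)
  have hflip := measurePreserving_negOn s
  have hcomm : negOn s ∘ m = m ∘ Prod.map id (negOn s) := by
    funext x j
    by_cases hj : j ∈ s <;> simp [m, negOn, hj]
  calc ν.map (negOn s) = (ν.prod (nullSignLaw s)).map (negOn s ∘ m) := by
        rw [← Measure.map_map hflip.measurable hm, hν]
    _ = ((ν.prod (nullSignLaw s)).map (Prod.map id (negOn s))).map m := by
        rw [hcomm, Measure.map_map hm (measurable_id.prodMap hflip.measurable)]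
    _ = ν := by rw [((MeasurePreserving.id ν).prod hflip).map_eq, hν]

lemma map_card_filter_le_eq {ν : Measure (ι → ℝ)} (hν : ν.map (negOn s) = ν) (t : ℝ) :
    ν.map (fun x => (s.filter fun j => t ≤ x j).card)
      = ν.map (fun x => (s.filter fun j => x j ≤ -t).card) := by
  have hge := measurable_card_filter s (P := (t ≤ ·)) measurableSet_Ici
  conv_lhs => rw [← hν, Measure.map_map hge (measurePreserving_negOn s).measurable]
  simp only [Function.comp_def, card_filter_le_negOn]

end SignFlip

/-- **Symmetry of null tail counts**: suppose the random vector `W ∈ ℝ^p` satisfies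
`(W_1,…,W_p) =_d (ε_1 W_1,…,ε_p W_p)` where `ε ∈ {±1}^p` is independent of `W`, with
`ε_j = +1` for all non-null `j` and `ε_j` i.i.d. uniform on `{±1}` for null `j`.
(This is expressed by pushing the product of the law of `W` and the law of `ε`
forward along coordinatewise multiplication.)  Then, for every `t > 0`, the count
`#{null j : W_j ≥ t}` has the same distribution as `#{null j : W_j ≤ −t}`. -/
theorem null_tail_counts_symmetric {p : ℕ}
    {Ω : Type*} [MeasurableSpace Ω] (μ : Measure Ω) [IsProbabilityMeasure μ]
    (W : Ω → Fin p → ℝ) (hWmeas : Measurable W)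
    (null : Finset (Fin p))
    (hsym : Measure.map
        (fun x : (Fin p → ℝ) × (Fin p → ℝ) => fun j => x.2 j * x.1 j)
        ((Measure.map W μ).prod
          (Measure.pi fun j : Fin p =>
            if j ∈ null then signUniform else MeasureTheory.Measure.dirac (1 : ℝ)))
      = Measure.map W μ) :
    ∀ t : ℝ, 0 < t →
      Measure.map (fun ω => (null.filter fun j => t ≤ W ω j).card) μ
        = Measure.map (fun ω => (null.filter fun j => W ω j ≤ -t).card) μ := by
  intro t _
  have hflip : (μ.map W).map (negOn null) = μ.map W := map_negOn_eq_self null hsym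
  have hge := measurable_card_filter null (P := (t ≤ ·)) measurableSet_Ici
  have hle := measurable_card_filter null (P := (· ≤ -t)) measurableSet_Iic
  have hcounts := map_card_filter_le_eq null hflip t
  rwa [Measure.map_map hge hWmeas, Measure.map_map hle hWmeas] at hcounts
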